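/- Let U ⊆ ℝ² be a nonempty open set and Γ : U → (ℝ² →ₗ[ℝ] ℝ² →ₗ[ℝ] ℝ²) a smooth symmetric Christoffel map whose Ricci tensor R_{ab} is symmetric. Then the connection D on the trivial bundle U × (ℝ² × ℝ) defined by D_a(X, ρ) = (∇_aX^b − δ_a{}^bρ, ∂_aρ + R_{ab}X^b) is flat (its curvature, acting on all smooth sections, vanishes identically on U) if and only if Y_{abc} := ∇_aR_{bc} − ∇_bR_{ac} vanishes identically on U. -/

import Mathlib

noncomputable section

/-- The plane ℝ², as `Fin 2 → ℝ`. -/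
abbrev E2 : Type := Fin 2 → ℝ

/-- The standard basis vectors of ℝ². -/
def bas (a : Fin 2) : E2 := Pi.single a 1

/-- Partial derivative ∂ₐ of a scalar function on ℝ². -/
def pd (a : Fin 2) (f : E2 → ℝ) (x : E2) : ℝ := fderiv ℝ f x (bas a)

/-- Components Γ_{ab}{}^c of a Christoffel map Γ : ℝ² → (ℝ² →ₗ ℝ² →ₗ ℝ²). -/
def chr (Γ : E2 → (E2 →ₗ[ℝ] E2 →ₗ[ℝ] E2)) (a b c : Fin 2) (x : E2) : ℝ :=
  Γ x (bas a) (bas b) c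

/-- Ricci tensor components built from Christoffel components `Γc a b c` (= Γ_{ab}{}^c):
`R_{ad} = ∂_cΓ_{ad}{}^c − ∂_aΓ_{cd}{}^c + Γ_{cb}{}^cΓ_{ad}{}^b − Γ_{ab}{}^cΓ_{cd}{}^b`. -/
def ricciC (Γc : Fin 2 → Fin 2 → Fin 2 → E2 → ℝ) (a d : Fin 2) (x : E2) : ℝ :=
  (∑ c, pd c (Γc a d c) x) - (∑ c, pd a (Γc c d c) x)
  + (∑ b, ∑ c, Γc c b c x * Γc a d b x)
  - (∑ b, ∑ c, Γc a b c x * Γc c d b x)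

/-- Covariant derivative of the Ricci tensor:
`∇_aR_{bc} = ∂_aR_{bc} − Γ_{ab}{}^dR_{dc} − Γ_{ac}{}^dR_{bd}`. -/
def covRicciC (Γc : Fin 2 → Fin 2 → Fin 2 → E2 → ℝ) (a b c : Fin 2) (x : E2) : ℝ :=
  pd a (ricciC Γc b c) x - (∑ d, Γc a b d x * ricciC Γc d c x)
    - (∑ d, Γc a c d x * ricciC Γc b d x)

/-- `Y_{abc} = ∇_aR_{bc} − ∇_bR_{ac}`. -/
def YC (Γc : Fin 2 → Fin 2 → Fin 2 → E2 → ℝ) (a b c : Fin 2) (x : E2) : ℝ :=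
  covRicciC Γc a b c x - covRicciC Γc b a c x

/-- Covariant derivative of a vector field: `∇_aX^c = ∂_aX^c + Γ_{ab}{}^cX^b`. -/
def covV (Γc : Fin 2 → Fin 2 → Fin 2 → E2 → ℝ) (X : E2 → E2) (a c : Fin 2) (x : E2) : ℝ :=
  pd a (fun y => X y c) x + ∑ b, Γc a b c x * X x b

/-- Vector part of the tractor connection `D` on the trivial rank-3 bundle:
`(D_a(X,ρ))^b = ∇_aX^b − δ_a{}^b ρ`. -/
def Dvec (Γc : Fin 2 → Fin 2 → Fin 2 → E2 → ℝ) (X : E2 → E2) (ρ : E2 → ℝ)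
    (a b : Fin 2) (x : E2) : ℝ :=
  covV Γc X a b x - (if a = b then ρ x else 0)

/-- Scalar part of the tractor connection `D`: `∂_aρ + R_{ab}X^b`. -/
def Dsc (Γc : Fin 2 → Fin 2 → Fin 2 → E2 → ℝ) (X : E2 → E2) (ρ : E2 → ℝ)
    (a : Fin 2) (x : E2) : ℝ :=
  pd a ρ x + ∑ b, ricciC Γc a b x * X x b

/-- Vector part of `D_a D_b (X,ρ)`: the free 1-form index `b` of `D s` is differentiated
covariantly using `Γ`. -/
def DDvec (Γc : Fin 2 → Fin 2 → Fin 2 → E2 → ℝ) (X : E2 → E2) (ρ : E2 → ℝ)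
    (a b c : Fin 2) (x : E2) : ℝ :=
  pd a (fun y => Dvec Γc X ρ b c y) x + (∑ d, Γc a d c x * Dvec Γc X ρ b d x)
    - (∑ d, Γc a b d x * Dvec Γc X ρ d c x) - (if a = c then Dsc Γc X ρ b x else 0)

/-- Scalar part of `D_a D_b (X,ρ)`. -/
def DDsc (Γc : Fin 2 → Fin 2 → Fin 2 → E2 → ℝ) (X : E2 → E2) (ρ : E2 → ℝ)
    (a b : Fin 2) (x : E2) : ℝ :=
  pd a (fun y => Dsc Γc X ρ b y) x - (∑ d, Γc a b d x * Dsc Γc X ρ d x)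
    + ∑ d, ricciC Γc a d x * Dvec Γc X ρ b d x

/-! ### Auxiliary lemmas -/

lemma pd_add {f g : E2 → ℝ} {x : E2} (hf : DifferentiableAt ℝ f x)
    (hg : DifferentiableAt ℝ g x) (a : Fin 2) :
    pd a (fun y => f y + g y) x = pd a f x + pd a g x := by
  simp [pd, fderiv_fun_add hf hg]

lemma pd_sub {f g : E2 → ℝ} {x : E2} (hf : DifferentiableAt ℝ f x)
    (hg : DifferentiableAt ℝ g x) (a : Fin 2) :
    pd a (fun y => f y - g y) x = pd a f x - pd a g x := by
  simp [pd, fderiv_fun_sub hf hg]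

lemma pd_mul {f g : E2 → ℝ} {x : E2} (hf : DifferentiableAt ℝ f x)
    (hg : DifferentiableAt ℝ g x) (a : Fin 2) :
    pd a (fun y => f y * g y) x = f x * pd a g x + g x * pd a f x := by
  simp [pd, fderiv_fun_mul hf hg]

lemma pd_sum2 {F : Fin 2 → E2 → ℝ} {x : E2} (hF : ∀ i, DifferentiableAt ℝ (F i) x)
    (a : Fin 2) : pd a (fun y => ∑ i, F i y) x = ∑ i, pd a (F i) x := by
  simp only [Fin.sum_univ_two]
  exact pd_add (hF 0) (hF 1) a

lemma contDiffAt_pd {f : E2 → ℝ} {x : E2} (hf : ContDiffAt ℝ (⊤ : ℕ∞) f x) (a : Fin 2) :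
    ContDiffAt ℝ (⊤ : ℕ∞) (fun y => pd a f y) x := by
  have h := hf.fderiv_right (m := (⊤ : ℕ∞)) (by simp)
  exact h.clm_apply contDiffAt_const

lemma pd_comm {f : E2 → ℝ} {x : E2} (hf : ContDiffAt ℝ (⊤ : ℕ∞) f x) (a b : Fin 2) :
    pd a (fun y => pd b f y) x = pd b (fun y => pd a f y) x := by
  have hd : DifferentiableAt ℝ (fderiv ℝ f) x :=
    (hf.fderiv_right (m := (⊤ : ℕ∞)) (by simp)).differentiableAt (by simp)
  have h1 : ∀ v w : E2, fderiv ℝ (fun y => fderiv ℝ f y v) x w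
      = fderiv ℝ (fderiv ℝ f) x w v := by
    intro v w
    rw [fderiv_clm_apply hd (differentiableAt_const v)]
    simp
  have hsymm := hf.isSymmSndFDerivAt (by rw [minSmoothness_of_isRCLikeNormedField]; exact WithTop.coe_le_coe.mpr (le_top : (2 : ℕ∞) ≤ ⊤))
  unfold pd
  rw [h1, h1, hsymm (bas b) (bas a)]

lemma diffAt_ricci {G : Fin 2 → Fin 2 → Fin 2 → E2 → ℝ} {x : E2}
    (hG : ∀ a b c, ContDiffAt ℝ (⊤ : ℕ∞) (G a b c) x) (a d : Fin 2) :
    DifferentiableAt ℝ (ricciC G a d) x := by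
  have h1 : ∀ (e a b c : Fin 2), DifferentiableAt ℝ (fun y => pd e (G a b c) y) x :=
    fun e a b c => (contDiffAt_pd (hG a b c) e).differentiableAt (by simp)
  have h2 : ∀ (a b c : Fin 2), DifferentiableAt ℝ (G a b c) x :=
    fun a b c => (hG a b c).differentiableAt (by simp)
  show DifferentiableAt ℝ (fun y => ricciC G a d y) x
  simp only [ricciC]
  refine DifferentiableAt.sub (DifferentiableAt.add (DifferentiableAt.sub ?_ ?_) ?_) ?_
  · exact DifferentiableAt.fun_sum fun c _ => h1 c a d c
  · exact DifferentiableAt.fun_sum fun c _ => h1 a c d c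
  · exact DifferentiableAt.fun_sum fun b _ => DifferentiableAt.fun_sum fun c _ =>
      (h2 c b c).mul (h2 a d b)
  · exact DifferentiableAt.fun_sum fun b _ => DifferentiableAt.fun_sum fun c _ =>
      (h2 a b c).mul (h2 c d b)

section Expand

variable {U : Set E2} {G : Fin 2 → Fin 2 → Fin 2 → E2 → ℝ} {X : E2 → E2} {ρ : E2 → ℝ} {x : E2}

lemma pd_Dvec (hUo : IsOpen U) (hx : x ∈ U)
    (hG : ∀ a b c, ContDiffOn ℝ (⊤ : ℕ∞) (G a b c) U)
    (hX : ∀ c, ContDiffOn ℝ (⊤ : ℕ∞) (fun y => X y c) U)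
    (hρ : ContDiffOn ℝ (⊤ : ℕ∞) ρ U) (a b c : Fin 2) :
    pd a (fun y => Dvec G X ρ b c y) x
      = pd a (fun y => pd b (fun z => X z c) y) x
        + ∑ d, (G b d c x * pd a (fun y => X y d) x + X x d * pd a (G b d c) x)
        - (if b = c then pd a ρ x else 0) := by
  have hXat : ∀ c, ContDiffAt ℝ (⊤ : ℕ∞) (fun y => X y c) x :=
    fun c => (hX c).contDiffAt (hUo.mem_nhds hx)
  have hρat : ContDiffAt ℝ (⊤ : ℕ∞) ρ x := hρ.contDiffAt (hUo.mem_nhds hx)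
  have hGat : ∀ a b c : Fin 2, ContDiffAt ℝ (⊤ : ℕ∞) (G a b c) x :=
    fun a b c => (hG a b c).contDiffAt (hUo.mem_nhds hx)
  have dX : ∀ d, DifferentiableAt ℝ (fun y => X y d) x :=
    fun d => (hXat d).differentiableAt (by simp)
  have dG : ∀ a b c : Fin 2, DifferentiableAt ℝ (G a b c) x :=
    fun a b c => (hGat a b c).differentiableAt (by simp)
  have d1 : DifferentiableAt ℝ (fun y => pd b (fun z => X z c) y) x :=
    (contDiffAt_pd (hXat c) b).differentiableAt (by simp)
  have d2 : ∀ d : Fin 2, DifferentiableAt ℝ (fun y => G b d c y * X y d) x :=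
    fun d => (dG b d c).mul (dX d)
  have d3 : DifferentiableAt ℝ (fun y => ∑ d, G b d c y * X y d) x :=
    DifferentiableAt.fun_sum fun d _ => d2 d
  have dcov : DifferentiableAt ℝ (fun y => covV G X b c y) x := d1.add d3
  have hcov : pd a (fun y => covV G X b c y) x
      = pd a (fun y => pd b (fun z => X z c) y) x
        + ∑ d, (G b d c x * pd a (fun y => X y d) x + X x d * pd a (G b d c) x) := by
    show pd a (fun y => pd b (fun z => X z c) y + ∑ d, G b d c y * X y d) x = _
    rw [pd_add d1 d3 a, pd_sum2 d2 a]
    exact congrArg _ (Finset.sum_congr rfl fun d _ => pd_mul (dG b d c) (dX d) a)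
  by_cases hbc : b = c
  · have hfun : (fun y => Dvec G X ρ b c y) = fun y => covV G X b c y - ρ y := by
      funext y; simp [Dvec, if_pos hbc]
    rw [hfun, pd_sub dcov (hρat.differentiableAt (by simp)) a, hcov, if_pos hbc]
  · have hfun : (fun y => Dvec G X ρ b c y) = fun y => covV G X b c y := by
      funext y; simp [Dvec, if_neg hbc]
    rw [hfun, hcov, if_neg hbc, sub_zero]

lemma pd_Dsc (hUo : IsOpen U) (hx : x ∈ U)
    (hG : ∀ a b c, ContDiffOn ℝ (⊤ : ℕ∞) (G a b c) U)
    (hX : ∀ c, ContDiffOn ℝ (⊤ : ℕ∞) (fun y => X y c) U)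
    (hρ : ContDiffOn ℝ (⊤ : ℕ∞) ρ U) (a b : Fin 2) :
    pd a (fun y => Dsc G X ρ b y) x
      = pd a (fun y => pd b ρ y) x
        + ∑ d, (ricciC G b d x * pd a (fun y => X y d) x
            + X x d * pd a (ricciC G b d) x) := by
  have hXat : ∀ c, ContDiffAt ℝ (⊤ : ℕ∞) (fun y => X y c) x :=
    fun c => (hX c).contDiffAt (hUo.mem_nhds hx)
  have hρat : ContDiffAt ℝ (⊤ : ℕ∞) ρ x := hρ.contDiffAt (hUo.mem_nhds hx)
  have hGat : ∀ a b c : Fin 2, ContDiffAt ℝ (⊤ : ℕ∞) (G a b c) x :=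
    fun a b c => (hG a b c).contDiffAt (hUo.mem_nhds hx)
  have dX : ∀ d, DifferentiableAt ℝ (fun y => X y d) x :=
    fun d => (hXat d).differentiableAt (by simp)
  have dR : ∀ d : Fin 2, DifferentiableAt ℝ (ricciC G b d) x :=
    fun d => diffAt_ricci hGat b d
  have d1 : DifferentiableAt ℝ (fun y => pd b ρ y) x :=
    (contDiffAt_pd hρat b).differentiableAt (by simp)
  have d2 : ∀ d : Fin 2, DifferentiableAt ℝ (fun y => ricciC G b d y * X y d) x :=
    fun d => (dR d).mul (dX d)
  have d3 : DifferentiableAt ℝ (fun y => ∑ d, ricciC G b d y * X y d) x :=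
    DifferentiableAt.fun_sum fun d _ => d2 d
  show pd a (fun y => pd b ρ y + ∑ d, ricciC G b d y * X y d) x = _
  rw [pd_add d1 d3 a, pd_sum2 d2 a]
  exact congrArg _ (Finset.sum_congr rfl fun d _ =>
    pd_mul (f := ricciC G b d) (g := fun y => X y d) (dR d) (dX d) a)

lemma key_sc (hUo : IsOpen U) (hx : x ∈ U)
    (hG : ∀ a b c, ContDiffOn ℝ (⊤ : ℕ∞) (G a b c) U)
    (hGsx : ∀ a b c, G a b c x = G b a c x)
    (hRsx : ∀ a b, ricciC G a b x = ricciC G b a x)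
    (hX : ∀ c, ContDiffOn ℝ (⊤ : ℕ∞) (fun y => X y c) U)
    (hρ : ContDiffOn ℝ (⊤ : ℕ∞) ρ U) (a b : Fin 2) :
    DDsc G X ρ a b x - DDsc G X ρ b a x = ∑ d, YC G a b d x * X x d := by
  have hρat : ContDiffAt ℝ (⊤ : ℕ∞) ρ x := hρ.contDiffAt (hUo.mem_nhds hx)
  have e1 := pd_Dsc hUo hx hG hX hρ a b
  have e2 := pd_Dsc hUo hx hG hX hρ b a
  have hg : ∀ c : Fin 2, G 1 0 c x = G 0 1 c x := fun c => hGsx 1 0 c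
  have hr : ricciC G 1 0 x = ricciC G 0 1 x := hRsx 1 0
  have hc : pd 1 (fun y => pd 0 ρ y) x = pd 0 (fun y => pd 1 ρ y) x := pd_comm hρat 1 0
  simp only [DDsc]
  rw [e1, e2]
  simp only [Dsc, Dvec, covV, YC, covRicciC, Fin.sum_univ_two]
  have i01 : (if (0:Fin 2) = 1 then ρ x else 0) = 0 := by simp
  have i10 : (if (1:Fin 2) = 0 then ρ x else 0) = 0 := by simp
  have i00 : (if (0:Fin 2) = 0 then ρ x else 0) = ρ x := by simp
  have i11 : (if (1:Fin 2) = 1 then ρ x else 0) = ρ x := by simp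
  fin_cases a <;> fin_cases b <;>
    simp only [Fin.mk_zero, Fin.mk_one, Fin.isValue, hg, hr, hc, i01, i10, i00, i11] <;>
    ring

lemma key_vec (hUo : IsOpen U) (hx : x ∈ U)
    (hG : ∀ a b c, ContDiffOn ℝ (⊤ : ℕ∞) (G a b c) U)
    (hGsx : ∀ a b c, G a b c x = G b a c x)
    (hX : ∀ c, ContDiffOn ℝ (⊤ : ℕ∞) (fun y => X y c) U)
    (hρ : ContDiffOn ℝ (⊤ : ℕ∞) ρ U) (a b c : Fin 2) :
    DDvec G X ρ a b c x - DDvec G X ρ b a c x = 0 := by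
  have hXat : ∀ c, ContDiffAt ℝ (⊤ : ℕ∞) (fun y => X y c) x :=
    fun c => (hX c).contDiffAt (hUo.mem_nhds hx)
  have e1 := pd_Dvec hUo hx hG hX hρ a b c
  have e2 := pd_Dvec hUo hx hG hX hρ b a c
  have hg : ∀ c : Fin 2, G 1 0 c x = G 0 1 c x := fun c => hGsx 1 0 c
  have hcX : ∀ c : Fin 2, pd 1 (fun y => pd 0 (fun z => X z c) y) x
      = pd 0 (fun y => pd 1 (fun z => X z c) y) x := fun c => pd_comm (hXat c) 1 0
  have j01 : ∀ r : ℝ, (if (0:Fin 2) = 1 then r else 0) = 0 := fun r => by simp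
  have j10 : ∀ r : ℝ, (if (1:Fin 2) = 0 then r else 0) = 0 := fun r => by simp
  have j00 : ∀ r : ℝ, (if (0:Fin 2) = 0 then r else 0) = r := fun r => by simp
  have j11 : ∀ r : ℝ, (if (1:Fin 2) = 1 then r else 0) = r := fun r => by simp
  simp only [DDvec]
  rw [e1, e2]
  simp only [Dvec, Dsc, covV, ricciC, Fin.sum_univ_two]
  fin_cases a <;> fin_cases b <;> fin_cases c <;>
    simp only [Fin.mk_zero, Fin.mk_one, Fin.isValue, hg, hcX, j01, j10, j00, j11, if_true, if_false, ite_true, ite_false] <;>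
    ring

end Expand

/-- the connection `D_a(X,ρ) = (∇_aX^b − δ_a{}^bρ, ∂_aρ + R_{ab}X^b)` is flat
(its curvature annihilates every smooth section) iff `Y_{abc} = ∇_aR_{bc} − ∇_bR_{ac} ≡ 0`. -/
theorem stmt_6 (U : Set E2) (hUo : IsOpen U) (hUne : U.Nonempty)
    (Γ : E2 → (E2 →ₗ[ℝ] E2 →ₗ[ℝ] E2))
    (hΓs : ∀ a b c : Fin 2, ContDiffOn ℝ (⊤ : ℕ∞) (chr Γ a b c) U)
    (hsym : ∀ x ∈ U, ∀ u v : E2, Γ x u v = Γ x v u)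
    (hRsym : ∀ x ∈ U, ∀ a b : Fin 2, ricciC (chr Γ) a b x = ricciC (chr Γ) b a x) :
    (∀ (X : E2 → E2) (ρ : E2 → ℝ),
        (∀ c : Fin 2, ContDiffOn ℝ (⊤ : ℕ∞) (fun x => X x c) U) → ContDiffOn ℝ (⊤ : ℕ∞) ρ U →
        ∀ x ∈ U, ∀ a b : Fin 2,
          (∀ c : Fin 2, DDvec (chr Γ) X ρ a b c x - DDvec (chr Γ) X ρ b a c x = 0) ∧
          DDsc (chr Γ) X ρ a b x - DDsc (chr Γ) X ρ b a x = 0)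
    ↔ (∀ x ∈ U, ∀ a b c : Fin 2, YC (chr Γ) a b c x = 0) := by
  have hGsx : ∀ x ∈ U, ∀ a b c : Fin 2, chr Γ a b c x = chr Γ b a c x := by
    intro x hx a b c
    simp only [chr, hsym x hx (bas a) (bas b)]
  constructor
  · intro h x hx a b c
    have hXs : ∀ c' : Fin 2, ContDiffOn ℝ (⊤ : ℕ∞) (fun _ : E2 => bas c c') U :=
      fun _ => contDiffOn_const
    have hsc := (h (fun _ => bas c) (fun _ => 0) hXs contDiffOn_const x hx a b).2
    have hk := key_sc (ρ := fun _ => (0:ℝ)) hUo hx hΓs (fun a b c => hGsx x hx a b c)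
        (hRsym x hx) hXs contDiffOn_const a b
    rw [hsc] at hk
    have hsum : ∑ d, YC (chr Γ) a b d x * bas c d = YC (chr Γ) a b c x := by
      fin_cases c <;> simp [bas, Fin.sum_univ_two, Pi.single_apply]
    rw [hsum] at hk
    exact hk.symm
  · intro hY X ρ hX hρ x hx a b
    refine ⟨fun c => key_vec hUo hx hΓs (fun a b c => hGsx x hx a b c) hX hρ a b c, ?_⟩
    rw [key_sc hUo hx hΓs (fun a b c => hGsx x hx a b c) (hRsym x hx) hX hρ a b]
    exact Finset.sum_eq_zero fun d _ => by rw [hY x hx a b d, zero_mul]
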